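/- In the epidemic setting with severity, testing and app usage, let t ∈ ℝ with Ω_t nonempty, let τ > 0, g in the range of G, and a ∈ {app, no app}, with Ω_{t−τ,g,a} nonempty. Assume: (i) there is a quantity c (independent of a) such that for each a' ∈ {app, no app} with Ω_{t−τ,g,a'} nonempty, E_{P_{t−τ,g,a'}}(n^τ) = c·(1 − ξ_{t−τ}·F^T_{t−τ,g,a'}(τ)); (ii) on Ω_{t−τ}, A is independent of G, i.e. P_{t−τ}(A = a' | G = g) = ε_{t−τ,a'} := P_{t−τ}(A = a') for every a' and every g with Ω_{t−τ,g} nonempty; and (iii) 1 − ξ_{t−τ}·F^T_{t−τ,g,a}(τ) > 0 and 1 − ξ_{t−τ}·F^T_{t−τ,g}(τ) > 0. Then P_t(τ^σ_t = τ, Ĝ_t = g, Â_t = a)/(1 − ξ_{t−τ}·F^T_{t−τ,g,a}(τ)) = ε_{t−τ,a} · P_t(τ^σ_t = τ, Ĝ_t = g)/(1 − ξ_{t−τ}·F^T_{t−τ,g}(τ)). -/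

import Mathlib

open Finset
open scoped Classical ENNReal NNReal

noncomputable section

variable {Ω : Type*} [Fintype Ω]

/-- Number of elements of `Ω` satisfying `E`, as a real number. -/
def cnt (E : Ω → Prop) : ℝ := ((Finset.univ.filter E).card : ℝ)

/-- The uniform (counting) probability of the event `E`. -/
def pr (E : Ω → Prop) : ℝ := cnt E / (Fintype.card Ω : ℝ)

/-- The conditional probability of the event `E` given the event `C`
(junk value `0` if `C` is empty). -/
def prC (C E : Ω → Prop) : ℝ := cnt (fun ω => C ω ∧ E ω) / cnt C

/-- The expectation of `X` under the uniform probability measure. -/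
def expec (X : Ω → ℝ) : ℝ := (∑ ω, X ω) / (Fintype.card Ω : ℝ)

/-- The conditional expectation of `X` given the event `C`, i.e. the average of `X`
over `C` (junk value `0` if `C` is empty). -/
def expecC (C : Ω → Prop) (X : Ω → ℝ) : ℝ :=
  (∑ ω ∈ Finset.univ.filter C, X ω) / cnt C

end

/-- Whether or not an individual uses the contact-tracing app. -/
inductive AppUse : Type
  | app : AppUse
  | noapp : AppUse
  deriving DecidableEq

instance instFintypeAppUse : Fintype AppUse where
  elems := {AppUse.app, AppUse.noapp}
  complete := by intro x; cases x <;> simp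


noncomputable section

variable {Ω : Type*} [Fintype Ω]

/-- `ninf tI σ τ ω` is the number of people infected by `ω` exactly at `ω`'s infectious
age `τ`: the number of `ω' ∈ Ω_{>0}` with `σ ω' = ω` and generation time `τ^σ ω' = τ`. -/
def ninf (tI : Ω → ℝ) (σ : Ω → Ω) (τ : ℝ) (ω : Ω) : ℝ :=
  cnt (fun ω' => 0 < tI ω' ∧ σ ω' = ω ∧ tI ω' - tI (σ ω') = τ)

/-- The (finitely many) positive times `τ` such that `Ω_{t-τ}` is nonempty. -/
def genTimes (tI : Ω → ℝ) (t : ℝ) : Finset ℝ :=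
  (Finset.univ.image (fun ω' => t - tI ω')).filter (fun τ => 0 < τ)

end

noncomputable section

variable {Ω : Type*} [Fintype Ω]

/-- The (finitely many) positive times `τ` such that `Ω_{t-τ,g,a}` is nonempty. -/
def genTimesGA (tI G : Ω → ℝ) (A : Ω → AppUse) (t g : ℝ) (a : AppUse) : Finset ℝ :=
  ((Finset.univ.filter (fun ω' => G ω' = g ∧ A ω' = a)).image (fun ω' => t - tI ω')).filter
    (fun τ => 0 < τ)

/-- `FT tI G τT t' g τ` is the improper CDF `F^T_{t',g}(τ) = P_{t',g}(τ^T ≤ τ)` of the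
testing time of individuals infected at `t'` with severity `g`. -/
def FT (tI G : Ω → ℝ) (τT : Ω → ℝ≥0∞) (t' g τ : ℝ) : ℝ :=
  prC (fun ω => tI ω = t' ∧ G ω = g) (fun ω => (τT ω : EReal) ≤ (τ : ℝ))

/-- `FTa tI G A τT t' g a τ` is the improper CDF
`F^T_{t',g,a}(τ) = P_{t',g,a}(τ^T ≤ τ)` of the testing time of individuals infected at
`t'` with severity `g` and app usage `a`. -/
def FTa (tI G : Ω → ℝ) (A : Ω → AppUse) (τT : Ω → ℝ≥0∞) (t' g : ℝ) (a : AppUse)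
    (τ : ℝ) : ℝ :=
  prC (fun ω => tI ω = t' ∧ G ω = g ∧ A ω = a) (fun ω => (τT ω : EReal) ≤ (τ : ℝ))

end

/-! Weight each fibre `Ω_{t−τ,g,a'}` by its size: then hypothesis (i) reads
`Σ_{Ω_{t−τ,g,a'}} n^τ = c · (#Ω_{t−τ,g,a'} − ξ · #{τ^T ≤ τ})`, an identity that also holds for
empty fibres and is additive in `a'`, so it persists for `Ω_{t−τ,g}`. Counting the
individuals infected at `t` by their infectors, `P_t(τ^σ = τ, Ĝ = g, Â = a) · #Ω_t` equals
`Σ_{Ω_{t−τ,g,a}} n^τ = c · #Ω_{t−τ,g,a} · (1 − ξ F^T_{t−τ,g,a}(τ))`, and likewise without `a`.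
Both sides of the claim thus reduce to `c · #Ω_{t−τ,g,a} / #Ω_t`, using
`ε_{t−τ,a} = #Ω_{t−τ,g,a} / #Ω_{t−τ,g}` by independence. -/

section Counting

variable {Ω : Type*} [Fintype Ω]

lemma cnt_congr {P Q : Ω → Prop} (h : ∀ ω, P ω ↔ Q ω) : cnt P = cnt Q := by
  rw [show P = Q from funext fun ω => propext (h ω)]

lemma cnt_eq_zero_iff {C : Ω → Prop} : cnt C = 0 ↔ ∀ ω, ¬ C ω := by
  simp [cnt, Finset.filter_eq_empty_iff]

lemma cnt_eq_sum_fiberwise {β : Type*} [Fintype β] [DecidableEq β] (C : Ω → Prop)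
    (f : Ω → β) : cnt C = ∑ b, cnt (fun ω => C ω ∧ f ω = b) := by
  rw [cnt, Finset.card_eq_sum_card_fiberwise (f := f) (t := Finset.univ)
    (fun _ _ => Finset.mem_coe.2 (Finset.mem_univ _)), Nat.cast_sum]
  refine Finset.sum_congr rfl fun b _ => ?_
  rw [cnt, Finset.filter_filter]
  -- the two sides differ only in their `Decidable` instances
  congr

lemma cnt_mul_expecC (C : Ω → Prop) (X : Ω → ℝ) :
    cnt C * expecC C X = ∑ ω ∈ Finset.univ.filter C, X ω := by
  by_cases hC : cnt C = 0
  · rw [hC, zero_mul, eq_comm]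
    exact Finset.sum_eq_zero fun ω hω =>
      absurd (Finset.mem_filter.1 hω).2 (cnt_eq_zero_iff.1 hC ω)
  · exact mul_div_cancel₀ _ hC

lemma cnt_mul_prC (C E : Ω → Prop) : cnt C * prC C E = cnt (fun ω => C ω ∧ E ω) := by
  by_cases hC : cnt C = 0
  · rw [hC, zero_mul, eq_comm, cnt_eq_zero_iff]
    exact fun ω hω => cnt_eq_zero_iff.1 hC ω hω.1
  · exact mul_div_cancel₀ _ hC

lemma cnt_mul_expecC_eq_of_nonempty {C E : Ω → Prop} {X : Ω → ℝ} {c x : ℝ}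
    (h : (∃ ω, C ω) → expecC C X = c * (1 - x * prC C E)) :
    cnt C * expecC C X = c * cnt C * (1 - x * prC C E) := by
  by_cases hC : ∃ ω, C ω
  · rw [h hC]
    ring
  · rw [cnt_eq_zero_iff.2 (not_exists.1 hC)]
    ring

lemma cnt_mul_expecC_eq_of_fibers {β : Type*} [Fintype β] [DecidableEq β] {C E : Ω → Prop}
    {X : Ω → ℝ} {c x : ℝ} (f : Ω → β)
    (h : ∀ b, (∃ ω, C ω ∧ f ω = b) →
      expecC (fun ω => C ω ∧ f ω = b) X = c * (1 - x * prC (fun ω => C ω ∧ f ω = b) E)) :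
    cnt C * expecC C X = c * cnt C * (1 - x * prC C E) := by
  have hlin : ∀ D : Ω → Prop, c * cnt D * (1 - x * prC D E) =
      c * (cnt D - x * cnt (fun ω => D ω ∧ E ω)) := fun D => by
    rw [← cnt_mul_prC]
    ring
  calc cnt C * expecC C X
      = ∑ b, cnt (fun ω => C ω ∧ f ω = b) * expecC (fun ω => C ω ∧ f ω = b) X := by
        simp only [cnt_mul_expecC]
        rw [← Finset.sum_fiberwise _ f X]
        refine Finset.sum_congr rfl fun b _ => ?_
        rw [Finset.filter_filter]
        congr
    _ = ∑ b, c * (cnt (fun ω => C ω ∧ f ω = b) -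
          x * cnt (fun ω => (C ω ∧ f ω = b) ∧ E ω)) :=
        Finset.sum_congr rfl fun b _ => (cnt_mul_expecC_eq_of_nonempty (h b)).trans (hlin _)
    _ = c * (cnt C - x * cnt (fun ω => C ω ∧ E ω)) := by
        rw [cnt_eq_sum_fiberwise C f, cnt_eq_sum_fiberwise (fun ω => C ω ∧ E ω) f,
          Finset.mul_sum, ← Finset.sum_sub_distrib, Finset.mul_sum]
        refine Finset.sum_congr rfl fun b _ => ?_
        rw [cnt_congr fun ω => and_right_comm]
    _ = c * cnt C * (1 - x * prC C E) := (hlin C).symm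

end Counting

section Infection

variable {Ω : Type*} [Fintype Ω] (tI : Ω → ℝ) (σ : Ω → Ω) (τ : ℝ)

lemma sum_ninf_eq_cnt (C : Ω → Prop) :
    ∑ ω ∈ Finset.univ.filter C, ninf tI σ τ ω =
      cnt (fun ω' => 0 < tI ω' ∧ tI ω' - tI (σ ω') = τ ∧ C (σ ω')) := by
  rw [cnt, Finset.card_eq_sum_card_fiberwise (f := σ) (t := Finset.univ.filter C)
    (fun ω' hω' => by simp_all), Nat.cast_sum]
  refine Finset.sum_congr rfl fun ω hω => ?_
  rw [ninf, cnt, Finset.filter_filter]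
  congr 2
  ext ω'
  simp only [Finset.mem_filter, Finset.mem_univ, true_and] at hω ⊢
  constructor
  · rintro ⟨hpos, rfl, hage⟩
    exact ⟨⟨hpos, hage, hω⟩, rfl⟩
  · rintro ⟨⟨hpos, hage, -⟩, rfl⟩
    exact ⟨hpos, rfl, hage⟩

lemma prC_infector_eq (t : ℝ) (P : Ω → Prop) :
    prC (fun ω => tI ω = t) (fun ω => 0 < tI ω ∧ tI ω - tI (σ ω) = τ ∧ P (σ ω)) =
      cnt (fun ω => tI ω = t - τ ∧ P ω) * expecC (fun ω => tI ω = t - τ ∧ P ω) (ninf tI σ τ) /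
        cnt (fun ω => tI ω = t) := by
  rw [cnt_mul_expecC, sum_ninf_eq_cnt, prC]
  congr 1
  refine cnt_congr fun ω => ⟨?_, ?_⟩
  · rintro ⟨ht, hpos, hage, hP⟩
    exact ⟨hpos, hage, by linarith, hP⟩
  · rintro ⟨hpos, hage, ht, hP⟩
    exact ⟨by linarith, hpos, hage, hP⟩

end Infection

theorem statement_15_general {Ω : Type*} [Fintype Ω] (tI : Ω → ℝ) (σ : Ω → Ω)
    (G : Ω → ℝ) (A : Ω → AppUse) (τT : Ω → ℝ≥0∞) (ξ : ℝ → ℝ) (t : ℝ)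
    (τ : ℝ) (g : ℝ) (a : AppUse)
    (hnea : (Finset.univ.filter
      (fun ω => tI ω = t - τ ∧ G ω = g ∧ A ω = a)).Nonempty)
    (hc : ∃ c : ℝ, ∀ a' : AppUse,
      (Finset.univ.filter (fun ω => tI ω = t - τ ∧ G ω = g ∧ A ω = a')).Nonempty →
        expecC (fun ω => tI ω = t - τ ∧ G ω = g ∧ A ω = a') (ninf tI σ τ) =
          c * (1 - ξ (t - τ) * FTa tI G A τT (t - τ) g a' τ))
    (hAind : ∀ (a' : AppUse) (g' : ℝ),
      (Finset.univ.filter (fun ω => tI ω = t - τ ∧ G ω = g')).Nonempty →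
        prC (fun ω => tI ω = t - τ ∧ G ω = g') (fun ω => A ω = a') =
          prC (fun ω => tI ω = t - τ) (fun ω => A ω = a'))
    (hpos1 : 0 < 1 - ξ (t - τ) * FTa tI G A τT (t - τ) g a τ)
    (hpos2 : 0 < 1 - ξ (t - τ) * FT tI G τT (t - τ) g τ) :
    prC (fun ω => tI ω = t)
        (fun ω => 0 < tI ω ∧ tI ω - tI (σ ω) = τ ∧ G (σ ω) = g ∧ A (σ ω) = a) /
      (1 - ξ (t - τ) * FTa tI G A τT (t - τ) g a τ) =
    prC (fun ω => tI ω = t - τ) (fun ω => A ω = a) *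
      (prC (fun ω => tI ω = t)
          (fun ω => 0 < tI ω ∧ tI ω - tI (σ ω) = τ ∧ G (σ ω) = g) /
        (1 - ξ (t - τ) * FT tI G τT (t - τ) g τ)) := by
  obtain ⟨c, hc⟩ := hc
  replace hc : ∀ a', (∃ ω, tI ω = t - τ ∧ G ω = g ∧ A ω = a') →
      expecC (fun ω => tI ω = t - τ ∧ G ω = g ∧ A ω = a') (ninf tI σ τ) =
        c * (1 - ξ (t - τ) * FTa tI G A τT (t - τ) g a' τ) :=
    fun a' ⟨ω, hω⟩ => hc a' ⟨ω, Finset.mem_filter.2 ⟨Finset.mem_univ ω, hω⟩⟩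
  obtain ⟨ω₀, hω₀⟩ := hnea
  obtain ⟨ht₀, hg₀, -⟩ := (Finset.mem_filter.1 hω₀).2
  have hNg : cnt (fun ω => tI ω = t - τ ∧ G ω = g) ≠ 0 := fun h =>
    cnt_eq_zero_iff.1 h ω₀ ⟨ht₀, hg₀⟩
  have hε : prC (fun ω => tI ω = t - τ) (fun ω => A ω = a) =
      cnt (fun ω => tI ω = t - τ ∧ G ω = g ∧ A ω = a) /
        cnt (fun ω => tI ω = t - τ ∧ G ω = g) := by
    rw [← hAind a g ⟨ω₀, Finset.mem_filter.2 ⟨Finset.mem_univ ω₀, ht₀, hg₀⟩⟩, prC]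
    simp only [and_assoc]
  have hMa : cnt (fun ω => tI ω = t - τ ∧ G ω = g ∧ A ω = a) *
      expecC (fun ω => tI ω = t - τ ∧ G ω = g ∧ A ω = a) (ninf tI σ τ) =
        c * cnt (fun ω => tI ω = t - τ ∧ G ω = g ∧ A ω = a) *
          (1 - ξ (t - τ) * FTa tI G A τT (t - τ) g a τ) :=
    cnt_mul_expecC_eq_of_nonempty (hc a)
  have hMg : cnt (fun ω => tI ω = t - τ ∧ G ω = g) *
      expecC (fun ω => tI ω = t - τ ∧ G ω = g) (ninf tI σ τ) =
        c * cnt (fun ω => tI ω = t - τ ∧ G ω = g) *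
          (1 - ξ (t - τ) * FT tI G τT (t - τ) g τ) :=
    cnt_mul_expecC_eq_of_fibers A (by simpa only [and_assoc, FTa] using hc)
  rw [prC_infector_eq tI σ τ t (fun ω => G ω = g ∧ A ω = a),
    prC_infector_eq tI σ τ t (fun ω => G ω = g), hMa, hMg, hε]
  field_simp [hpos1.ne', hpos2.ne']

/-- relation between the app-refined and the aggregated weights in
the time-evolution equation, cf. Eq. (20) of the paper.  Epidemic setting with
severity `G`, app usage `A`, testing time `τ^T` and isolation probabilities `ξ`.  Let
`τ > 0`, `g` in the range of `G`, `a ∈ {app, no app}` with `Ω_{t−τ,g,a}` nonempty.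
Assume (i) there is `c` (independent of `a`) with
`E_{P_{t−τ,g,a'}}(n^τ) = c·(1 − ξ_{t−τ}·F^T_{t−τ,g,a'}(τ))` for each `a'` with
`Ω_{t−τ,g,a'}` nonempty; (ii) on `Ω_{t−τ}`, `A` is independent of `G`; and (iii) the
two denominators are positive.  Then
`P_t(τ^σ = τ, Ĝ = g, Â = a)/(1 − ξ_{t−τ}·F^T_{t−τ,g,a}(τ)) = ε_{t−τ,a} · P_t(τ^σ = τ, Ĝ = g)/(1 − ξ_{t−τ}·F^T_{t−τ,g}(τ))`. -/
theorem statement_15 {Ω : Type*} [Fintype Ω] (tI : Ω → ℝ) (σ : Ω → Ω)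
    (hσ : ∀ ω, 0 < tI ω → tI (σ ω) < tI ω)
    (G : Ω → ℝ) (A : Ω → AppUse) (τT : Ω → ℝ≥0∞) (ξ : ℝ → ℝ)
    (hξ : ∀ s : ℝ, 0 ≤ ξ s ∧ ξ s ≤ 1) (t : ℝ)
    (hne : (Finset.univ.filter (fun ω => tI ω = t)).Nonempty)
    (τ : ℝ) (hτ : 0 < τ) (g : ℝ) (hg : ∃ ω, G ω = g) (a : AppUse)
    (hnea : (Finset.univ.filter
      (fun ω => tI ω = t - τ ∧ G ω = g ∧ A ω = a)).Nonempty)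
    (hc : ∃ c : ℝ, ∀ a' : AppUse,
      (Finset.univ.filter (fun ω => tI ω = t - τ ∧ G ω = g ∧ A ω = a')).Nonempty →
        expecC (fun ω => tI ω = t - τ ∧ G ω = g ∧ A ω = a') (ninf tI σ τ) =
          c * (1 - ξ (t - τ) * FTa tI G A τT (t - τ) g a' τ))
    (hAind : ∀ (a' : AppUse) (g' : ℝ),
      (Finset.univ.filter (fun ω => tI ω = t - τ ∧ G ω = g')).Nonempty →
        prC (fun ω => tI ω = t - τ ∧ G ω = g') (fun ω => A ω = a') =
          prC (fun ω => tI ω = t - τ) (fun ω => A ω = a'))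
    (hpos1 : 0 < 1 - ξ (t - τ) * FTa tI G A τT (t - τ) g a τ)
    (hpos2 : 0 < 1 - ξ (t - τ) * FT tI G τT (t - τ) g τ) :
    prC (fun ω => tI ω = t)
        (fun ω => 0 < tI ω ∧ tI ω - tI (σ ω) = τ ∧ G (σ ω) = g ∧ A (σ ω) = a) /
      (1 - ξ (t - τ) * FTa tI G A τT (t - τ) g a τ) =
    prC (fun ω => tI ω = t - τ) (fun ω => A ω = a) *
      (prC (fun ω => tI ω = t)
          (fun ω => 0 < tI ω ∧ tI ω - tI (σ ω) = τ ∧ G (σ ω) = g) /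
        (1 - ξ (t - τ) * FT tI G τT (t - τ) g τ)) :=
  statement_15_general tI σ G A τT ξ t τ g a hnea hc hAind hpos1 hpos2
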